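/- Fix $t > 0$. Define $A_s(\phi) = \int_0^s e^{2\phi_u}\,du$, $Z_s(\phi) = e^{-\phi_s}A_s(\phi)$, and $\mathcal{T}(\phi)(s) = \phi_s - \log\{1 + \frac{A_s(\phi)}{A_t(\phi)}(e^{2\phi_t} - 1)\}$. Then $Z_s(\mathcal{T}(\phi)) = Z_s(\phi)$ for all $s \in [0,t]$ and all continuous $\phi : [0,t]\to\mathbb{R}$. -/

import Mathlib

/-- The exponential additive functional. -/
noncomputable def A (φ : ℝ → ℝ) (s : ℝ) : ℝ := ∫ u in (0:ℝ)..s, Real.exp (2 * φ u)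

/-- The transformation `𝒯` on paths over `[0,t]`. -/
noncomputable def T (t : ℝ) (φ : ℝ → ℝ) (s : ℝ) : ℝ :=
  φ s - Real.log (1 + A φ s / A φ t * (Real.exp (2 * φ t) - 1))

/-- The transformation `Z`. -/
noncomputable def Z (φ : ℝ → ℝ) (s : ℝ) : ℝ := Real.exp (-φ s) * A φ s

theorem stmt12 (t : ℝ) (ht : 0 < t) (φ : ℝ → ℝ)
    (hφ : ContinuousOn φ (Set.Icc 0 t)) :
    ∀ s ∈ Set.Icc (0:ℝ) t, Z (T t φ) s = Z φ s := by
  set g : ℝ → ℝ := fun u => Real.exp (2 * φ u) with hg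
  have hgcont : ContinuousOn g (Set.Icc 0 t) :=
    Real.continuous_exp.comp_continuousOn (continuousOn_const.mul hφ)
  have hgpos : ∀ u, 0 < g u := fun u => Real.exp_pos _
  -- integrability
  have hgint : ∀ x y, x ∈ Set.Icc (0:ℝ) t → y ∈ Set.Icc (0:ℝ) t →
      IntervalIntegrable g MeasureTheory.volume x y := by
    intro x y hx hy
    exact (hgcont.mono (Set.uIcc_subset_Icc hx hy)).intervalIntegrable
  have h0t : (0:ℝ) ∈ Set.Icc (0:ℝ) t := ⟨le_rfl, ht.le⟩
  have htt : t ∈ Set.Icc (0:ℝ) t := ⟨ht.le, le_rfl⟩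
  -- continuity of A
  have hAcont : ContinuousOn (A φ) (Set.Icc 0 t) := by
    have := intervalIntegral.continuousOn_primitive_interval
      (f := g) (μ := MeasureTheory.volume) (a := 0) (b := t)
      (by rw [Set.uIcc_of_le ht.le]
          exact hgcont.integrableOn_compact isCompact_Icc)
    rwa [Set.uIcc_of_le ht.le] at this
  have hA0 : A φ 0 = 0 := intervalIntegral.integral_same
  have hAt : 0 < A φ t :=
    intervalIntegral.intervalIntegral_pos_of_pos_on (hgint 0 t h0t htt)
      (fun x _ => hgpos x) ht
  have hAnonneg : ∀ x ∈ Set.Icc (0:ℝ) t, 0 ≤ A φ x := by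
    intro x hx
    exact intervalIntegral.integral_nonneg hx.1 (fun u _ => (hgpos u).le)
  have hAle : ∀ x ∈ Set.Icc (0:ℝ) t, A φ x ≤ A φ t := by
    intro x hx
    have hsplit : A φ x + ∫ u in x..t, g u = A φ t :=
      intervalIntegral.integral_add_adjacent_intervals (hgint 0 x h0t hx) (hgint x t hx htt)
    have : 0 ≤ ∫ u in x..t, g u :=
      intervalIntegral.integral_nonneg hx.2 (fun u _ => (hgpos u).le)
    linarith
  -- positivity of the denominator
  set c : ℝ := Real.exp (2 * φ t) - 1 with hc
  set D : ℝ → ℝ := fun u => 1 + A φ u / A φ t * c with hD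
  have hDpos : ∀ u ∈ Set.Icc (0:ℝ) t, 0 < D u := by
    intro u hu
    have h1 : 0 ≤ A φ u / A φ t := div_nonneg (hAnonneg u hu) hAt.le
    have h2 : A φ u / A φ t ≤ 1 := (div_le_one hAt).2 (hAle u hu)
    have h3 : 0 < Real.exp (2 * φ t) := Real.exp_pos _
    simp only [hD, hc]
    nlinarith [mul_nonneg h1 h3.le, mul_nonneg (sub_nonneg.2 h2) h3.le]
  -- pointwise identity of the integrand
  have hTg : ∀ u ∈ Set.Icc (0:ℝ) t, Real.exp (2 * T t φ u) = g u / (D u) ^ 2 := by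
    intro u hu
    have hDu := hDpos u hu
    have key : Real.exp (2 * Real.log (D u)) = (D u) ^ 2 := by
      rw [show (2:ℝ) * Real.log (D u) = Real.log ((D u) ^ 2) by rw [Real.log_pow]; norm_num,
        Real.exp_log (by positivity)]
    rw [T, mul_sub, Real.exp_sub]
    show Real.exp (2 * φ u) / Real.exp (2 * Real.log (D u)) = g u / (D u) ^ 2
    rw [key]
  -- the key computation of A (T t φ)
  have hAT : ∀ s ∈ Set.Icc (0:ℝ) t, A (T t φ) s = A φ s / D s := by
    intro s hs
    have hsub : Set.Icc (0:ℝ) s ⊆ Set.Icc 0 t := Set.Icc_subset_Icc le_rfl hs.2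
    have hAconts : ContinuousOn (A φ) (Set.Icc 0 s) := hAcont.mono hsub
    have hFcont : ContinuousOn (fun u => A φ u / D u) (Set.Icc 0 s) := by
      apply hAconts.div
      · exact continuousOn_const.add ((hAconts.div_const _).mul continuousOn_const)
      · intro u hu; exact (hDpos u (hsub hu)).ne'
    have hderiv : ∀ u ∈ Set.Ioo (0:ℝ) s, HasDerivAt (fun u => A φ u / D u) (g u / (D u)^2) u := by
      intro u hu
      have hut : u ∈ Set.Ioo (0:ℝ) t := ⟨hu.1, lt_of_lt_of_le hu.2 hs.2⟩
      have huIcc : u ∈ Set.Icc (0:ℝ) t := ⟨hut.1.le, hut.2.le⟩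
      have hgC : ContinuousAt g u :=
        (hgcont.mono Set.Ioo_subset_Icc_self).continuousAt (Ioo_mem_nhds hut.1 hut.2)
      have hA' : HasDerivAt (A φ) (g u) u :=
        intervalIntegral.integral_hasDerivAt_right (hgint 0 u h0t huIcc)
          ((ContinuousOn.stronglyMeasurableAtFilter isOpen_Ioo
            (hgcont.mono Set.Ioo_subset_Icc_self)) u hut) hgC
      have hD' : HasDerivAt D (g u / A φ t * c) u :=
        (((hA'.div_const (A φ t)).mul_const c).const_add 1)
      have hnum : g u * D u - A φ u * (g u / A φ t * c) = g u := by
        show g u * (1 + A φ u / A φ t * c) - A φ u * (g u / A φ t * c) = g u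
        field_simp
        ring
      have := hA'.div hD' (hDpos u huIcc).ne'
      rw [hnum] at this
      exact this
    have hintd : IntervalIntegrable (fun u => g u / (D u)^2) MeasureTheory.volume 0 s := by
      apply ContinuousOn.intervalIntegrable
      rw [Set.uIcc_of_le hs.1]
      apply (hgcont.mono hsub).div
      · exact (continuousOn_const.add (((hAcont.mono hsub).div_const _).mul continuousOn_const)).pow 2
      · intro u hu; exact pow_ne_zero _ (hDpos u (hsub hu)).ne'
    have hEq : A (T t φ) s = ∫ u in (0:ℝ)..s, g u / (D u)^2 := by
      rw [A]
      apply intervalIntegral.integral_congr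
      intro u hu
      rw [Set.uIcc_of_le hs.1] at hu
      exact hTg u (hsub hu)
    rw [hEq, intervalIntegral.integral_eq_sub_of_hasDeriv_right_of_le hs.1 hFcont
        (fun u hu => (hderiv u hu).hasDerivWithinAt) hintd]
    simp [hA0]
  -- conclude
  intro s hs
  have hDs := hDpos s hs
  rw [Z, Z, hAT s hs, T]
  rw [show -(φ s - Real.log (1 + A φ s / A φ t * (Real.exp (2 * φ t) - 1)))
      = -φ s + Real.log (D s) by simp only [hD, hc]; ring]
  rw [Real.exp_add, Real.exp_log hDs]
  field_simp
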